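/- arXiv:2511.13895 — 3 statements merged into one kernel-verified Lean document; each statement's English description precedes it below -/
import Mathlib

section
/- Let α ∈ (0,1) and let G₀ be a Borel probability measure on ℝ with finite first moment. Then a pair (ℓ*,u*) ∈ ℝ² with ℓ* ≤ u* minimizes the expected interval score (ℓ,u) ↦ ∫ S_int(ℓ,u;τ) dG₀(τ) over all pairs ℓ ≤ u if and only if ℓ* is an α/2-quantile of G₀ and u* is a (1−α/2)-quantile of G₀. -/
/-!
Pointwise, `S_int(ℓ, u; τ) = (2/α) (ρ_{α/2}(τ - ℓ) + ρ_{1-α/2}(τ - u))` with the pinball loss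
`ρ_q(y) = q y + (-y)⁺`, so the expected score is a sum of two expected pinball losses `R_q`,
coupled only through the constraint `ℓ ≤ u`. For `a ≤ b` the increment `R_q(b) - R_q(a)` lies
between `(b - a) (G(-∞, a] - q)` and `(b - a) (G(-∞, b) - q)`. Hence `R_q` decreases up to a
`q`-quantile and increases after it, while at a point that is not a `q`-quantile a small one-sided
move strictly decreases `R_q`. When such a move of one endpoint would break `ℓ ≤ u`, moving both
endpoints to the same point still lowers the score, because `α/2 ≤ 1 - α/2`.
-/

open MeasureTheory Set

/-- The interval score of the interval `[ℓ, u]` at observation `τ`, at level `α`. -/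
noncomputable def Sint (α ℓ u τ : ℝ) : ℝ :=
  (u - ℓ) + (2 / α) * (ℓ - τ) * (if τ < ℓ then 1 else 0)
    + (2 / α) * (τ - u) * (if u < τ then 1 else 0)

/-- `x` is a `q`-quantile of the Borel probability measure `G` on `ℝ`. -/
def IsQuantile (G : Measure ℝ) (q x : ℝ) : Prop :=
  q ≤ (G (Iic x)).toReal ∧ 1 - q ≤ (G (Ici x)).toReal

open ProbabilityTheory Filter Topology

def pinballLoss (q y : ℝ) : ℝ := q * y + max (-y) 0

noncomputable def expectedPinballLoss (G : Measure ℝ) (q x : ℝ) : ℝ :=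
  ∫ τ, pinballLoss q (τ - x) ∂G

lemma Sint_eq_pinballLoss {α : ℝ} (hα : α ≠ 0) (ℓ u τ : ℝ) :
    Sint α ℓ u τ = 2 / α * (pinballLoss (α / 2) (τ - ℓ) + pinballLoss (1 - α / 2) (τ - u)) := by
  simp only [Sint, pinballLoss, neg_sub]
  field_simp
  split_ifs <;> simp only [max_def] <;> split_ifs <;> linarith

lemma pinballLoss_sub_le (q : ℝ) {a b : ℝ} (hab : a ≤ b) (τ : ℝ) :
    pinballLoss q (τ - b) - pinballLoss q (τ - a) ≤ (b - a) * ((Iio b).indicator 1 τ - q) := by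
  simp only [pinballLoss, indicator_apply, mem_Iio, Pi.one_apply, neg_sub]
  split_ifs <;> simp only [max_def] <;> split_ifs <;> nlinarith

lemma le_pinballLoss_sub (q : ℝ) {a b : ℝ} (hab : a ≤ b) (τ : ℝ) :
    (b - a) * ((Iic a).indicator 1 τ - q) ≤ pinballLoss q (τ - b) - pinballLoss q (τ - a) := by
  simp only [pinballLoss, indicator_apply, mem_Iic, Pi.one_apply, neg_sub]
  split_ifs <;> simp only [max_def] <;> split_ifs <;> nlinarith

section

variable {G : Measure ℝ} [IsProbabilityMeasure G]

lemma measureReal_Iio_eq_leftLim_cdf (x : ℝ) : G.real (Iio x) = Function.leftLim (cdf G) x := by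
  conv_lhs => rw [← measure_cdf G]
  rw [measureReal_def, (cdf G).measure_Iio (tendsto_cdf_atBot G), sub_zero,
    ENNReal.toReal_ofReal]
  exact (cdf_nonneg G (x - 1)).trans ((monotone_cdf G).le_leftLim (by linarith))

lemma exists_gt_measureReal_Iio_lt {a q : ℝ} (h : G.real (Iic a) < q) :
    ∃ b > a, G.real (Iio b) < q := by
  rw [← cdf_eq_real] at h
  have hcont : Tendsto (cdf G) (𝓝[>] a) (𝓝 (cdf G a)) :=
    ((cdf G).right_continuous a).mono Ioi_subset_Ici_self
  obtain ⟨b, hb, hab⟩ := ((hcont.eventually_lt_const h).and self_mem_nhdsWithin).exists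
  exact ⟨b, hab, (measureReal_mono Iio_subset_Iic_self).trans_lt (cdf_eq_real G b ▸ hb)⟩

lemma exists_lt_lt_measureReal_Iic {a q : ℝ} (h : q < G.real (Iio a)) :
    ∃ b < a, q < G.real (Iic b) := by
  rw [measureReal_Iio_eq_leftLim_cdf] at h
  obtain ⟨b, hb, hba⟩ :=
    ((((monotone_cdf G).tendsto_leftLim a).eventually_const_lt h).and self_mem_nhdsWithin).exists
  exact ⟨b, hba, cdf_eq_real G b ▸ hb⟩

lemma isQuantile_iff {q x : ℝ} :
    IsQuantile G q x ↔ G.real (Iio x) ≤ q ∧ q ≤ G.real (Iic x) := by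
  rw [IsQuantile, ← compl_Iio, ← measureReal_def, ← measureReal_def,
    probReal_compl_eq_one_sub measurableSet_Iio]
  exact ⟨fun ⟨h₁, _⟩ ↦ ⟨by linarith, h₁⟩, fun ⟨h₁, h₂⟩ ↦ ⟨h₂, by linarith⟩⟩

lemma integrable_mul_indicator_one_sub {s : Set ℝ} (hs : MeasurableSet s) (c q : ℝ) :
    Integrable (fun τ ↦ c * (s.indicator 1 τ - q)) G :=
  (((integrable_const 1).indicator hs).sub (integrable_const q)).const_mul c

lemma integral_mul_indicator_one_sub {s : Set ℝ} (hs : MeasurableSet s) (c q : ℝ) :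
    ∫ τ, c * (s.indicator 1 τ - q) ∂G = c * (G.real s - q) := by
  rw [integral_const_mul, Pi.one_def, integral_sub ((integrable_const 1).indicator hs)
    (integrable_const q), integral_indicator_const _ hs, integral_const, probReal_univ, one_smul,
    smul_eq_mul, mul_one]

variable (hG : Integrable id G)
include hG

section

variable (q : ℝ)

lemma integrable_pinballLoss (x : ℝ) : Integrable (fun τ ↦ pinballLoss q (τ - x)) G :=
  ((hG.sub (integrable_const x)).const_mul q).add (hG.sub (integrable_const x)).neg.pos_part

lemma expectedPinballLoss_sub_le {a b : ℝ} (hab : a ≤ b) :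
    expectedPinballLoss G q b - expectedPinballLoss G q a ≤ (b - a) * (G.real (Iio b) - q) := by
  rw [expectedPinballLoss, expectedPinballLoss, ← integral_sub (integrable_pinballLoss hG q b)
    (integrable_pinballLoss hG q a), ← integral_mul_indicator_one_sub measurableSet_Iio]
  exact integral_mono ((integrable_pinballLoss hG q b).sub (integrable_pinballLoss hG q a))
    (integrable_mul_indicator_one_sub measurableSet_Iio _ _) (pinballLoss_sub_le q hab)

lemma le_expectedPinballLoss_sub {a b : ℝ} (hab : a ≤ b) :
    (b - a) * (G.real (Iic a) - q) ≤ expectedPinballLoss G q b - expectedPinballLoss G q a := by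
  rw [expectedPinballLoss, expectedPinballLoss, ← integral_sub (integrable_pinballLoss hG q b)
    (integrable_pinballLoss hG q a), ← integral_mul_indicator_one_sub measurableSet_Iic]
  exact integral_mono (integrable_mul_indicator_one_sub measurableSet_Iic _ _)
    ((integrable_pinballLoss hG q b).sub (integrable_pinballLoss hG q a)) (le_pinballLoss_sub q hab)

lemma antitoneOn_expectedPinballLoss {x : ℝ} (hx : G.real (Iio x) ≤ q) :
    AntitoneOn (expectedPinballLoss G q) (Iic x) := by
  intro a _ b hb hab
  have hb' : G.real (Iio b) ≤ q := (measureReal_mono (Iio_subset_Iio hb)).trans hx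
  nlinarith [expectedPinballLoss_sub_le hG q hab]

lemma strictAntiOn_expectedPinballLoss {x : ℝ} (hx : G.real (Iio x) < q) :
    StrictAntiOn (expectedPinballLoss G q) (Iic x) := by
  intro a _ b hb hab
  have hb' : G.real (Iio b) < q := (measureReal_mono (Iio_subset_Iio hb)).trans_lt hx
  nlinarith [expectedPinballLoss_sub_le hG q hab.le]

lemma monotoneOn_expectedPinballLoss {x : ℝ} (hx : q ≤ G.real (Iic x)) :
    MonotoneOn (expectedPinballLoss G q) (Ici x) := by
  intro a ha b _ hab
  have ha' : q ≤ G.real (Iic a) := hx.trans (measureReal_mono (Iic_subset_Iic.2 ha))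
  nlinarith [le_expectedPinballLoss_sub hG q hab]

lemma strictMonoOn_expectedPinballLoss {x : ℝ} (hx : q < G.real (Iic x)) :
    StrictMonoOn (expectedPinballLoss G q) (Ici x) := by
  intro a ha b _ hab
  have ha' : q < G.real (Iic a) := hx.trans_le (measureReal_mono (Iic_subset_Iic.2 ha))
  nlinarith [le_expectedPinballLoss_sub hG q hab.le]

lemma IsQuantile.expectedPinballLoss_le {x : ℝ} (hx : IsQuantile G q x) (y : ℝ) :
    expectedPinballLoss G q x ≤ expectedPinballLoss G q y := by
  obtain ⟨hIio, hIic⟩ := isQuantile_iff.1 hx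
  rcases le_total y x with hyx | hxy
  · exact antitoneOn_expectedPinballLoss hG q hIio hyx self_mem_Iic hyx
  · exact monotoneOn_expectedPinballLoss hG q hIic self_mem_Ici hxy hxy

end

section

variable {q q' l u : ℝ} (hqq' : q ≤ q') (hlu : l ≤ u)
  (hmin : ∀ ℓ v, ℓ ≤ v → expectedPinballLoss G q l + expectedPinballLoss G q' u ≤
    expectedPinballLoss G q ℓ + expectedPinballLoss G q' v)
include hqq' hlu hmin

lemma isQuantile_left_of_forall_le : IsQuantile G q l := by
  rw [isQuantile_iff]
  constructor
  · by_contra! h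
    obtain ⟨b, hbl, hb⟩ := exists_lt_lt_measureReal_Iic h
    have := strictMonoOn_expectedPinballLoss hG q hb self_mem_Ici hbl.le hbl
    linarith [hmin b u (hbl.le.trans hlu)]
  · by_contra! h
    obtain ⟨b, hlb, hb⟩ := exists_gt_measureReal_Iio_lt h
    have := strictAntiOn_expectedPinballLoss hG q hb hlb.le self_mem_Iic hlb
    rcases le_total b u with hbu | hub
    · linarith [hmin b u hbu]
    · have := antitoneOn_expectedPinballLoss hG q' (hb.le.trans hqq') hub self_mem_Iic hub
      linarith [hmin b b le_rfl]

lemma isQuantile_right_of_forall_le : IsQuantile G q' u := by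
  rw [isQuantile_iff]
  constructor
  · by_contra! h
    obtain ⟨b, hbu, hb⟩ := exists_lt_lt_measureReal_Iic h
    have := strictMonoOn_expectedPinballLoss hG q' hb self_mem_Ici hbu.le hbu
    rcases le_total l b with hlb | hbl
    · linarith [hmin l b hlb]
    · have := monotoneOn_expectedPinballLoss hG q (hqq'.trans hb.le) self_mem_Ici hbl hbl
      linarith [hmin b b le_rfl]
  · by_contra! h
    obtain ⟨b, hub, hb⟩ := exists_gt_measureReal_Iio_lt h
    have := strictAntiOn_expectedPinballLoss hG q' hb hub.le self_mem_Iic hub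
    linarith [hmin l b (hlu.trans hub.le)]

end

theorem forall_expectedPinballLoss_add_le_iff {q q' l u : ℝ} (hqq' : q ≤ q') (hlu : l ≤ u) :
    (∀ ℓ v, ℓ ≤ v → expectedPinballLoss G q l + expectedPinballLoss G q' u ≤
      expectedPinballLoss G q ℓ + expectedPinballLoss G q' v) ↔
      IsQuantile G q l ∧ IsQuantile G q' u :=
  ⟨fun hmin ↦ ⟨isQuantile_left_of_forall_le hG hqq' hlu hmin,
      isQuantile_right_of_forall_le hG hqq' hlu hmin⟩,
    fun ⟨hl, hu⟩ ℓ v _ ↦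
      add_le_add (hl.expectedPinballLoss_le hG q ℓ) (hu.expectedPinballLoss_le hG q' v)⟩

lemma integral_Sint {α : ℝ} (hα : α ≠ 0) (ℓ u : ℝ) :
    ∫ τ, Sint α ℓ u τ ∂G =
      2 / α * (expectedPinballLoss G (α / 2) ℓ + expectedPinballLoss G (1 - α / 2) u) := by
  simp_rw [Sint_eq_pinballLoss hα]
  rw [integral_const_mul, integral_add (integrable_pinballLoss hG _ ℓ)
    (integrable_pinballLoss hG _ u), expectedPinballLoss, expectedPinballLoss]

end

/-- A pair `(ℓ*, u*)` with `ℓ* ≤ u*` minimizes the expected interval score over all pairs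
`ℓ ≤ u` if and only if `ℓ*` is an `α/2`-quantile and `u*` a `(1 − α/2)`-quantile of `G₀`. -/
theorem stmt4 (α : ℝ) (hα : α ∈ Ioo (0 : ℝ) 1)
    (G₀ : Measure ℝ) [IsProbabilityMeasure G₀] (hG₀ : Integrable id G₀)
    (lstar ustar : ℝ) (hlu : lstar ≤ ustar) :
    (∀ ℓ u : ℝ, ℓ ≤ u →
        (∫ τ, Sint α lstar ustar τ ∂G₀) ≤ ∫ τ, Sint α ℓ u τ ∂G₀)
      ↔ (IsQuantile G₀ (α / 2) lstar ∧ IsQuantile G₀ (1 - α / 2) ustar) := by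
  obtain ⟨hα₀, hα₁⟩ := hα
  simp only [integral_Sint hG₀ hα₀.ne', mul_le_mul_iff_right₀ (by positivity : 0 < 2 / α)]
  exact forall_expectedPinballLoss_add_le_iff hG₀ (by linarith) hlu
end

section
/- Let α ∈ (0,1) and let ℓ ≤ u and τ be real numbers. Then the interval score decomposes as a sum of scaled pinball losses: S_int(ℓ,u;τ) = (2/α)·[ρ_{α/2}(τ − ℓ) + ρ_{1−α/2}(τ − u)]. -/
/-- The pinball (quantile) loss at level `q`: `ρ_q(x) = x (q − 1{x<0})`. -/
noncomputable def pinball (q x : ℝ) : ℝ := x * (q - if x < 0 then 1 else 0)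

/-- The interval score decomposes as a sum of scaled pinball losses:
`S_int(ℓ,u;τ) = (2/α) (ρ_{α/2}(τ−ℓ) + ρ_{1−α/2}(τ−u))`. -/
theorem stmt5 (α ℓ u τ : ℝ) (hα : α ∈ Set.Ioo (0 : ℝ) 1) (hlu : ℓ ≤ u) :
    Sint α ℓ u τ = (2 / α) * (pinball (α / 2) (τ - ℓ) + pinball (1 - α / 2) (τ - u)) := by
  have hα0 : α ≠ 0 := ne_of_gt hα.1
  unfold Sint pinball
  simp only [sub_lt_zero]
  split_ifs with h1 h2 h3 h4 h5 h6 h7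
  · linarith
  · linarith
  · field_simp; ring1
  · linarith
  · linarith
  · field_simp; ring1
  · field_simp; ring1
  · have : τ = u := le_antisymm (not_lt.mp h5) (not_lt.mp h7)
    subst this; field_simp; ring1
end

section
/- Let τ ∈ ℝ, σ > 0, n ≥ 1 a natural number, ω > 0, z > 0 and α ∈ (0,1). Let W be a Gaussian random variable with mean τ and variance σ²/n, and set a = z·σ/√(ωn). Then the expected score of the tempered-posterior summaries equals E[(W − τ)² + S_int(W − a, W + a; τ)] = σ²/n + (2σ/√n)·[ z/√ω + (2/α)·( φ(z/√ω) − (z/√ω)·Φ̄(z/√ω) ) ]. -/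
open MeasureTheory ProbabilityTheory Set

/-- The standard normal density `φ(t) = (2π)^{-1/2} exp(-t²/2)`. -/
noncomputable def phi (t : ℝ) : ℝ := (Real.sqrt (2 * Real.pi))⁻¹ * Real.exp (-t ^ 2 / 2)

/-- The standard normal cumulative distribution function `Φ`. -/
noncomputable def Phi (t : ℝ) : ℝ := ((gaussianReal 0 1) (Iic t)).toReal

/-!
Write `W = m + √v X` with `X` standard normal. The squared error contributes `v · E X² = v`,
the interval width `2√v c`, and the two tail penalties of the interval score are
`(2/α) √v (X - c)⁺` and `(2/α) √v (-X - c)⁺`, which have the same law by the symmetry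
of `X`. Finally `E (X - c)⁺ = φ(c) - c Φ̄(c)`, because `φ' = -x φ` gives
`∫_c^∞ x φ(x) dx = φ(c)`.
-/

open Filter Topology
open scoped NNReal

lemma Sint_eq_add_max (α ℓ u τ : ℝ) :
    Sint α ℓ u τ = (u - ℓ) + (2 / α) * (max (ℓ - τ) 0 + max (τ - u) 0) := by
  unfold Sint
  split_ifs <;> simp only [max_def] <;> split_ifs <;> linarith

lemma Sint_add_mul_of_nonneg (α m s c x : ℝ) (hs : 0 ≤ s) :
    Sint α (m + s * x - s * c) (m + s * x + s * c) m
      = s * (2 * c + (2 / α) * (max (x - c) 0 + max (-x - c) 0)) := by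
  have hmax (y : ℝ) : max (s * y) 0 = s * max y 0 := by rw [mul_max_of_nonneg _ _ hs, mul_zero]
  rw [Sint_eq_add_max, show m + s * x - s * c - m = s * (x - c) by ring,
    show m - (m + s * x + s * c) = s * (-x - c) by ring, hmax, hmax]
  ring

lemma gaussianPDFReal_zero_one : gaussianPDFReal 0 1 = phi := by
  ext x
  simp [gaussianPDFReal, phi]

lemma integrable_phi : Integrable phi :=
  gaussianPDFReal_zero_one ▸ integrable_gaussianPDFReal 0 1

lemma integrable_mul_phi : Integrable fun x => x * phi x := by
  convert (integrable_mul_exp_neg_mul_sq (b := 2⁻¹) (by norm_num)).const_mul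
    (Real.sqrt (2 * Real.pi))⁻¹ using 2 with x
  simp only [phi]
  ring_nf

lemma hasDerivAt_phi (x : ℝ) : HasDerivAt phi (-(x * phi x)) x := by
  have h : HasDerivAt (fun t : ℝ => -t ^ 2 / 2) (-x) x :=
    ((hasDerivAt_pow 2 x).neg.div_const 2).congr_deriv (by norm_num; ring)
  exact (h.exp.const_mul (Real.sqrt (2 * Real.pi))⁻¹).congr_deriv (by simp only [phi]; ring)

lemma tendsto_phi_atTop : Tendsto phi atTop (𝓝 0) := by
  have h : Tendsto (fun t : ℝ => -t ^ 2 / 2) atTop atBot :=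
    (tendsto_neg_atTop_atBot.comp (tendsto_pow_atTop two_ne_zero)).atBot_div_const two_pos
  have := (Real.tendsto_exp_atBot.comp h).const_mul (Real.sqrt (2 * Real.pi))⁻¹
  rwa [mul_zero] at this

lemma integral_Ioi_mul_phi (c : ℝ) : ∫ x in Ioi c, x * phi x = phi c := by
  have h := integral_Ioi_of_hasDerivAt_of_tendsto (f := -phi) (m := 0)
    (hasDerivAt_phi c).continuousAt.neg.continuousWithinAt
    (fun x _ => neg_neg (x * phi x) ▸ (hasDerivAt_phi x).neg) integrable_mul_phi.integrableOn
    (by rw [← neg_zero]; exact tendsto_phi_atTop.neg)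
  simpa using h

lemma integral_Ioi_phi (c : ℝ) : ∫ x in Ioi c, phi x = 1 - Phi c := by
  rw [← gaussianPDFReal_zero_one, ← ENNReal.toReal_ofReal
    (setIntegral_nonneg measurableSet_Ioi fun x _ => gaussianPDFReal_nonneg 0 1 x),
    ← gaussianReal_apply_eq_integral 0 one_ne_zero, ← compl_Iic, ← measureReal_def,
    probReal_compl_eq_one_sub measurableSet_Iic]
  rfl

lemma integral_max_sub_gaussianReal_zero_one (c : ℝ) :
    ∫ x, max (x - c) 0 ∂gaussianReal 0 1 = phi c - c * (1 - Phi c) := by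
  have hpt (x : ℝ) : gaussianPDFReal 0 1 x • max (x - c) 0
      = (Ioi c).indicator (fun x => x * phi x - c * phi x) x := by
    rw [gaussianPDFReal_zero_one, smul_eq_mul]
    by_cases hx : c < x
    · rw [indicator_of_mem (mem_Ioi.2 hx), max_eq_left (by linarith)]
      ring
    · rw [indicator_of_notMem (mt mem_Ioi.1 hx), max_eq_right (by linarith), mul_zero]
  rw [integral_gaussianReal_eq_integral_smul one_ne_zero, integral_congr_ae (ae_of_all _ hpt),
    integral_indicator measurableSet_Ioi, integral_sub integrable_mul_phi.integrableOn
      (integrable_phi.const_mul c).integrableOn, integral_const_mul, integral_Ioi_mul_phi,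
    integral_Ioi_phi]

lemma integral_comp_neg_gaussianReal_zero {E : Type*} [NormedAddCommGroup E] [NormedSpace ℝ E]
    (v : ℝ≥0) (f : ℝ → E) : ∫ x, f (-x) ∂gaussianReal 0 v = ∫ x, f x ∂gaussianReal 0 v := by
  conv_rhs => rw [← neg_zero, ← gaussianReal_map_neg]
  exact ((Homeomorph.neg ℝ).measurableEmbedding.integral_map f).symm

lemma integral_sq_gaussianReal_zero_one : ∫ x, x ^ 2 ∂gaussianReal 0 1 = 1 := by
  simpa using (variance_of_integral_eq_zero (X := id) measurable_id.aemeasurable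
    integral_id_gaussianReal (μ := gaussianReal 0 1)).symm

lemma gaussianReal_eq_map_zero_one (m : ℝ) (v : ℝ≥0) :
    gaussianReal m v = (gaussianReal 0 1).map fun x => m + √v * x := by
  rw [show (fun x => m + √v * x) = (m + ·) ∘ (√v * ·) from rfl,
    ← Measure.map_map (by fun_prop) (by fun_prop), gaussianReal_map_const_mul,
    gaussianReal_map_const_add]
  congr 1
  · simp
  · ext
    simp

lemma integral_gaussianReal_eq_integral_zero_one {E : Type*} [NormedAddCommGroup E]
    [NormedSpace ℝ E] {m : ℝ} {v : ℝ≥0} {f : ℝ → E}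
    (hf : AEStronglyMeasurable f (gaussianReal m v)) :
    ∫ w, f w ∂gaussianReal m v = ∫ x, f (m + √v * x) ∂gaussianReal 0 1 := by
  rw [gaussianReal_eq_map_zero_one m v] at hf ⊢
  exact integral_map (by fun_prop) hf

lemma integral_sub_sq_add_Sint_gaussianReal (α m c : ℝ) (v : ℝ≥0) :
    ∫ w, ((w - m) ^ 2 + Sint α (w - √v * c) (w + √v * c) m) ∂gaussianReal m v
      = v + 2 * √v * (c + (2 / α) * (phi c - c * (1 - Phi c))) := by
  have hcont : Continuous fun w => (w - m) ^ 2 + Sint α (w - √v * c) (w + √v * c) m := by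
    simp only [Sint_eq_add_max]
    fun_prop
  have hpt (x : ℝ) : (m + √v * x - m) ^ 2
        + Sint α (m + √v * x - √v * c) (m + √v * x + √v * c) m
      = v * x ^ 2 + √v * (2 * c + (2 / α) * (max (x - c) 0 + max (-x - c) 0)) := by
    rw [Sint_add_mul_of_nonneg _ _ _ _ _ (Real.sqrt_nonneg _), add_sub_cancel_left, mul_pow,
      Real.sq_sqrt v.coe_nonneg]
  have hid : Integrable id (gaussianReal 0 1) :=
    memLp_one_iff_integrable.1 (by simpa using memLp_id_gaussianReal (μ := 0) (v := 1) 1)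
  have hsq : Integrable (fun x => x ^ 2) (gaussianReal 0 1) :=
    (memLp_id_gaussianReal 2).integrable_sq
  have hpos : Integrable (fun x => max (x - c) 0) (gaussianReal 0 1) :=
    (hid.sub (integrable_const c)).pos_part
  have hneg : Integrable (fun x => max (-x - c) 0) (gaussianReal 0 1) :=
    (hid.neg.sub (integrable_const c)).pos_part
  rw [integral_gaussianReal_eq_integral_zero_one hcont.aestronglyMeasurable]
  simp only [hpt]
  rw [integral_add, integral_const_mul, integral_const_mul, integral_add, integral_const,
    integral_const_mul, integral_add hpos hneg,
    integral_comp_neg_gaussianReal_zero 1 fun x => max (x - c) 0,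
    integral_sq_gaussianReal_zero_one, integral_max_sub_gaussianReal_zero_one]
  · simp only [probReal_univ, smul_eq_mul, one_mul]
    ring
  all_goals fun_prop

theorem stmt10_general (τ σ : ℝ) (n : ℕ) (ω z α : ℝ)
    (hσ : 0 < σ) :
    (∫ w, ((w - τ) ^ 2
          + Sint α (w - z * σ / Real.sqrt (ω * n)) (w + z * σ / Real.sqrt (ω * n)) τ)
        ∂(gaussianReal τ (Real.toNNReal (σ ^ 2 / n))))
      = σ ^ 2 / n
        + (2 * σ / Real.sqrt n)
          * (z / Real.sqrt ω
            + (2 / α) * (phi (z / Real.sqrt ω)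
              - (z / Real.sqrt ω) * (1 - Phi (z / Real.sqrt ω)))) := by
  have hvar : ((σ ^ 2 / n).toNNReal : ℝ) = σ ^ 2 / n := Real.coe_toNNReal _ (by positivity)
  have hsd : Real.sqrt ((σ ^ 2 / n).toNNReal : ℝ) = σ / Real.sqrt n := by
    rw [hvar, Real.sqrt_div (sq_nonneg σ), Real.sqrt_sq hσ.le]
  have hwidth : z * σ / Real.sqrt (ω * n)
      = Real.sqrt ((σ ^ 2 / n).toNNReal : ℝ) * (z / Real.sqrt ω) := by
    rw [hsd, Real.sqrt_mul' ω n.cast_nonneg]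
    ring
  rw [hwidth, integral_sub_sq_add_Sint_gaussianReal, hsd, hvar]
  ring

/-- Expected combined score of the tempered-posterior summaries in the Gaussian model:
for `W ~ N(τ, σ²/n)` and `a = zσ/√(ωn)`,
`E[(W − τ)² + S_int(W − a, W + a; τ)]
  = σ²/n + (2σ/√n) [ z/√ω + (2/α)(φ(z/√ω) − (z/√ω) Φ̄(z/√ω)) ]`. -/
theorem stmt10 (τ σ : ℝ) (n : ℕ) (ω z α : ℝ)
    (hσ : 0 < σ) (hn : 1 ≤ n) (hω : 0 < ω) (hz : 0 < z) (hα : α ∈ Ioo (0 : ℝ) 1) :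
    (∫ w, ((w - τ) ^ 2
          + Sint α (w - z * σ / Real.sqrt (ω * n)) (w + z * σ / Real.sqrt (ω * n)) τ)
        ∂(gaussianReal τ (Real.toNNReal (σ ^ 2 / n))))
      = σ ^ 2 / n
        + (2 * σ / Real.sqrt n)
          * (z / Real.sqrt ω
            + (2 / α) * (phi (z / Real.sqrt ω)
              - (z / Real.sqrt ω) * (1 - Phi (z / Real.sqrt ω)))) :=
  stmt10_general τ σ n ω z α hσ
end
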